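/- arXiv:1701.05654 — 3 statements merged into one kernel-verified Lean document; each statement's English description precedes it below -/
import Mathlib

section
/- Let Z ∈ {0,1}^{m×m} be the adjacency matrix of a finite directed graph on nodes J = {1,...,m}. Suppose there exists a permutation matrix O ∈ {0,1}^{m×m} (columns indexed by orders) such that for all j ≠ k: Z_{jk} − m·Z_{kj} ≤ Σ_{r=1}^m r(O_{kr} − O_{jr}) and Z_{jk} + Z_{kj} ≤ 1. Then the graph defined by Z is acyclic. -/
/-- Feasibility of the topological-order MIP constraints implies acyclicity of
the graph defined by the adjacency matrix Z. -/
theorem stmt2 (m : ℕ) (Z O : Fin m → Fin m → ℤ)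
    (hZbin : ∀ j k, Z j k = 0 ∨ Z j k = 1)
    (hZdiag : ∀ j, Z j j = 0)
    (hObin : ∀ k q, O k q = 0 ∨ O k q = 1)
    (hrow : ∀ k, ∑ q, O k q = 1)
    (hcol : ∀ q, ∑ k, O k q = 1)
    (h1 : ∀ j k, j ≠ k →
      Z j k - (m : ℤ) * Z k j ≤ ∑ r : Fin m, ((r : ℤ) + 1) * (O k r - O j r))
    (h2 : ∀ j k, j ≠ k → Z j k + Z k j ≤ 1) :
    ∀ v, ¬ Relation.TransGen (fun j k => Z j k = 1) v v := by
  set f : Fin m → ℤ := fun k => ∑ r : Fin m, ((r : ℤ) + 1) * O k r with hf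
  have key : ∀ j k, Z j k = 1 → f j < f k := by
    intro j k hjk
    have hne : j ≠ k := by
      rintro rfl
      rw [hZdiag j] at hjk
      exact one_ne_zero hjk.symm
    have hkj : Z k j = 0 := by
      rcases hZbin k j with h | h
      · exact h
      · exfalso
        have := h2 j k hne
        omega
    have hle := h1 j k hne
    rw [hjk, hkj, mul_zero] at hle
    have hsum : ∑ r : Fin m, ((r : ℤ) + 1) * (O k r - O j r) = f k - f j := by
      simp [hf, mul_sub, Finset.sum_sub_distrib]
    rw [hsum] at hle
    omega
  intro v hv
  have mono : ∀ a b, Relation.TransGen (fun j k => Z j k = 1) a b → f a < f b := by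
    intro a b h
    induction h with
    | single h => exact key _ _ h
    | tail _ h ih => exact lt_trans ih (key _ _ h)
  exact absurd (mono v v hv) (lt_irrefl _)
end

section
/- Let U ∈ ℝ^{m×m} and let Y* be an optimal solution of the projection problem min ‖Y − U‖_2^2 subject to the support graph of Y being acyclic. Let π* be a topological order of the support graph of Y* (arcs go from higher-order to lower-order nodes, i.e., Y*_{jk} ≠ 0 implies π*(j) > π*(k)). Then for all pairs (j,k) with π*(j) > π*(k), Y*_{jk} = U_{jk}. -/
/-! If an entry with `π j > π k` differed from `U j k`, overwriting it by `U j k` would keep every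
arc of the support descending along `π`, hence the support acyclic, while strictly decreasing the
distance to `U`: this contradicts optimality of `Y*`. -/

open Function

theorem Relation.TransGen.apply_lt {α β : Type*} [Preorder β] {r : α → α → Prop} {f : α → β}
    (hr : ∀ a b, r a b → f b < f a) {a b : α} (h : Relation.TransGen r a b) : f b < f a := by
  induction h with
  | single hab => exact hr _ _ hab
  | tail _ hbc ih => exact (hr _ _ hbc).trans ih

theorem Relation.not_transGen_self_of_apply_lt {α β : Type*} [Preorder β] {r : α → α → Prop}
    {f : α → β} (hr : ∀ a b, r a b → f b < f a) (a : α) : ¬ Relation.TransGen r a a :=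
  fun h => lt_irrefl _ (h.apply_lt hr)

theorem Finset.sum_apply_update_lt {ι β M : Type*} [Fintype ι] [DecidableEq ι] [AddCommMonoid M]
    [PartialOrder M] [IsOrderedCancelAddMonoid M] (φ : ι → β → M) (f : ι → β) (i : ι) (v : β)
    (h : φ i v < φ i (f i)) : ∑ x, φ x (update f i v x) < ∑ x, φ x (f x) := by
  refine Finset.sum_lt_sum (fun x _ => ?_) ⟨i, Finset.mem_univ i, by simpa using h⟩
  rcases eq_or_ne x i with rfl | hx
  · simpa using h.le
  · simp [hx]

theorem stmt5_general (m : ℕ) (U Ystar : Fin m → Fin m → ℝ) (π : Equiv.Perm (Fin m))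
    (htopo : ∀ j k, Ystar j k ≠ 0 → π k < π j)
    (hopt : ∀ Y : Fin m → Fin m → ℝ,
      (∀ v, ¬ Relation.TransGen (fun j k => Y j k ≠ 0) v v) →
      ∑ j, ∑ k, (Ystar j k - U j k) ^ 2 ≤ ∑ j, ∑ k, (Y j k - U j k) ^ 2) :
    ∀ j k, π k < π j → Ystar j k = U j k := by
  intro j k hjk
  by_contra hne
  set Y := update Ystar j (update (Ystar j) k (U j k))
  have hY : ∀ a b, Y a b ≠ 0 → π b < π a := by
    intro a b hab
    by_cases h : a = j ∧ b = k
    · obtain ⟨rfl, rfl⟩ := h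
      exact hjk
    · refine htopo a b ?_
      rcases eq_or_ne a j with rfl | ha
      · simpa [Y, show b ≠ k from fun hb => h ⟨rfl, hb⟩] using hab
      · simpa [Y, ha] using hab
  have hcloser : ∑ a, ∑ b, (Y a b - U a b) ^ 2 < ∑ a, ∑ b, (Ystar a b - U a b) ^ 2 :=
    Finset.sum_apply_update_lt (fun a row => ∑ b, (row b - U a b) ^ 2) Ystar j _ <|
      Finset.sum_apply_update_lt (fun b t => (t - U j b) ^ 2) (Ystar j) k _ <| by
        simpa using sq_pos_of_ne_zero (sub_ne_zero.mpr hne)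
  exact (hopt Y (Relation.not_transGen_self_of_apply_lt hY)).not_gt hcloser

/-- In an optimal projection with topological order π*, every position with
π*(j) > π*(k) carries the full value U_{jk}. -/
theorem stmt5 (m : ℕ) (U Ystar : Fin m → Fin m → ℝ) (π : Equiv.Perm (Fin m))
    (hfeas : ∀ v, ¬ Relation.TransGen (fun j k => Ystar j k ≠ 0) v v)
    (htopo : ∀ j k, Ystar j k ≠ 0 → π k < π j)
    (hopt : ∀ Y : Fin m → Fin m → ℝ,
      (∀ v, ¬ Relation.TransGen (fun j k => Y j k ≠ 0) v v) →
      ∑ j, ∑ k, (Ystar j k - U j k) ^ 2 ≤ ∑ j, ∑ k, (Y j k - U j k) ^ 2) :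
    ∀ j k, π k < π j → Ystar j k = U j k :=
  stmt5_general m U Ystar π htopo hopt
end

section
/- Let π be a topological order on the nodes {1,...,m} and suppose Y is any matrix with supp(Y) ≤ adj(π). Let π' be obtained from π by swapping two nodes k₁, k₂ that are adjacent in the order (π(k₂) = π(k₁) + 1). If Y_{k₂ k₁} = 0, then supp(Y) ≤ adj(π') as well; consequently the optimal objective value of min F(Y) s.t. supp(Y) ≤ adj(π') is at most F(Y). -/
/-- Swapping two order-adjacent nodes k₁, k₂ with Y_{k₂k₁} = 0 preserves
feasibility of Y, so the optimal value under the swapped order is at most F(Y). -/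
theorem stmt18 (m : ℕ) (π : Equiv.Perm (Fin m)) (Y : Fin m → Fin m → ℝ)
    (k1 k2 : Fin m)
    (hadj : (π k2 : ℕ) = (π k1 : ℕ) + 1)
    (hsupp : ∀ j k, Y j k ≠ 0 → π k < π j)
    (hzero : Y k2 k1 = 0)
    (π' : Equiv.Perm (Fin m)) (hπ' : π' = π.trans (Equiv.swap (π k1) (π k2))) :
    (∀ j k, Y j k ≠ 0 → π' k < π' j) ∧
    (∀ (F : (Fin m → Fin m → ℝ) → ℝ) (v : ℝ),
      IsLeast {w : ℝ | ∃ Y' : Fin m → Fin m → ℝ,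
        (∀ j k, Y' j k ≠ 0 → π' k < π' j) ∧ w = F Y'} v → v ≤ F Y) := by
  have key : ∀ j k, Y j k ≠ 0 → π' k < π' j := by
    intro j k h
    have hlt := hsupp j k h
    have hlt' : (π k : ℕ) < (π j : ℕ) := hlt
    subst hπ'
    simp only [Equiv.trans_apply]
    rw [Fin.lt_def]
    by_cases hk1 : π k = π k1
    · have hj2 : π j ≠ π k2 := by
        intro he
        exact h (by rw [π.injective he, π.injective hk1]; exact hzero)
      have hj1 : π j ≠ π k1 := by
        intro he; rw [hk1, he] at hlt'; omega
      rw [hk1, Equiv.swap_apply_left, Equiv.swap_apply_of_ne_of_ne hj1 hj2]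
      have hne2 : (π j : ℕ) ≠ (π k2 : ℕ) := fun he => hj2 (Fin.ext he)
      rw [hk1] at hlt'
      omega
    · by_cases hk2 : π k = π k2
      · have hj1 : π j ≠ π k1 := by
          intro he; rw [hk2, he] at hlt'; omega
        have hj2 : π j ≠ π k2 := by
          intro he; rw [hk2, he] at hlt'; omega
        rw [hk2, Equiv.swap_apply_right, Equiv.swap_apply_of_ne_of_ne hj1 hj2]
        rw [hk2] at hlt'
        omega
      · rw [Equiv.swap_apply_of_ne_of_ne hk1 hk2]
        by_cases hj1 : π j = π k1
        · rw [hj1, Equiv.swap_apply_left]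
          rw [hj1] at hlt'
          omega
        · by_cases hj2 : π j = π k2
          · rw [hj2, Equiv.swap_apply_right]
            have hne1 : (π k : ℕ) ≠ (π k1 : ℕ) := fun he => hk1 (Fin.ext he)
            rw [hj2] at hlt'
            omega
          · rw [Equiv.swap_apply_of_ne_of_ne hj1 hj2]; omega
  refine ⟨key, fun F v hv => ?_⟩
  exact hv.2 ⟨Y, key, rfl⟩
end
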